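/- A finite word model W satisfies a normal-form FO²MOD formula φ if and only if every (l₁,…,l_m)-full type realized in W is φ-consistent. -/

import Mathlib

/-!
The conjuncts of `φ` are checked position by position, and at a position `v` each one is
determined by the full type of `v`. The occurrence bit of `(θ, β)` is nonzero iff some `w` with
`ordOf v w = θ` carries label `β`, which settles the `∀∀` and `∀∃` conjuncts. Sorting the
`ψⱼ`-witnesses of `v` by their pair `(ordOf v w, lab w)` writes their number as the sum of the
counts `wcount` over the pairs entailing `ψⱼ`, so its residue mod `lⱼ` only depends on the
residues stored in the full type.
-/

/-- The five order formulas over words. -/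
inductive WOrd where
  | eq | succ | pred | farR | farL
deriving DecidableEq

instance : Fintype WOrd where
  elems := {.eq, .succ, .pred, .farR, .farL}
  complete := by intro x; cases x <;> decide

/-- The unique order formula holding between two positions of a word. -/
def ordOf {N : ℕ} (i j : Fin N) : WOrd :=
  if i = j then .eq
  else if (j : ℕ) = (i : ℕ) + 1 then .succ
  else if (i : ℕ) = (j : ℕ) + 1 then .pred
  else if i < j then .farR
  else .farL

/-- A normal-form FO²MOD formula over unary signature `τ`. -/
structure NF (τ : Type) where
  n : ℕ
  m : ℕ
  npos : 0 < n
  mpos : 0 < m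
  chi : (τ → Bool) → (τ → Bool) → WOrd → Bool
  chis : Fin n → (τ → Bool) → (τ → Bool) → WOrd → Bool
  psi : Fin m → (τ → Bool) → (τ → Bool) → WOrd → Bool
  isLE : Fin m → Bool
  k : Fin m → ℕ
  l : Fin m → ℕ
  lpos : ∀ j, 0 < l j
  klt : ∀ j, k j < l j

/-- The comparison `a ⋈ⱼ kⱼ` of the `j`-th modulo conjunct. -/
def NF.bow {τ : Type} (φ : NF τ) (j : Fin φ.m) (a : ℕ) : Prop :=
  if φ.isLE j then a ≤ φ.k j else φ.k j ≤ a

/-- Satisfaction of a normal-form formula in a finite word. -/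
def WSat {τ : Type} [Fintype τ] [DecidableEq τ]
    (φ : NF τ) (N : ℕ) (lab : Fin N → τ → Bool) : Prop :=
  (∀ i j : Fin N, φ.chi (lab i) (lab j) (ordOf i j) = true) ∧
  (∀ c : Fin φ.n, ∀ i : Fin N, ∃ j : Fin N, φ.chis c (lab i) (lab j) (ordOf i j) = true) ∧
  (∀ c : Fin φ.m, ∀ i : Fin N,
    φ.bow c ((Finset.univ.filter
      fun j : Fin N => φ.psi c (lab i) (lab j) (ordOf i j) = true).card % φ.l c))

/-- The number of positions of 1-type `β` in relative position `θ` to `v`. -/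
def wcount {τ : Type} [Fintype τ] [DecidableEq τ] {N : ℕ}
    (lab : Fin N → τ → Bool) (v : Fin N) (θ : WOrd) (β : τ → Bool) : ℕ :=
  (Finset.univ.filter fun w : Fin N => ordOf v w = θ ∧ lab w = β).card

/-- The `(l₁,…,l_m)`-full type realized by position `v`: for each order formula
and each 1-type it records the occurrence bit and the counts modulo each `lⱼ`. -/
def ftp {τ : Type} [Fintype τ] [DecidableEq τ] {N : ℕ} (φ : NF τ)
    (lab : Fin N → τ → Bool) (v : Fin N) :
    WOrd → (τ → Bool) → ℕ × (Fin φ.m → ℕ) :=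
  fun θ β => (min 1 (wcount lab v θ β), fun j => wcount lab v θ β % φ.l j)

/-- `φ`-consistency of a full type `ft` whose `θ₌` 1-type is `α`:
(1) no realized pair violates the `∀∀` conjunct; (2) each `∀∃` conjunct has a
witness; (3) each modulo conjunct has the right number of witnesses. -/
def Consistent {τ : Type} [Fintype τ] [DecidableEq τ] (φ : NF τ)
    (α : τ → Bool) (ft : WOrd → (τ → Bool) → ℕ × (Fin φ.m → ℕ)) : Prop :=
  (∀ (θ : WOrd) (β : τ → Bool),
      ft θ β ≠ (0, fun _ => 0) → φ.chi α β θ = true) ∧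
  (∀ c : Fin φ.n, ∃ (θ : WOrd) (β : τ → Bool),
      ft θ β ≠ (0, fun _ => 0) ∧ φ.chis c α β θ = true) ∧
  (∀ c : Fin φ.m,
    φ.bow c ((∑ θ : WOrd, ∑ β : τ → Bool,
      if φ.psi c α β θ = true then (ft θ β).2 c else 0) % φ.l c))

open Finset

lemma Finset.card_filter_comp_eq_sum_ite {ι κ : Type*} [Fintype ι] [Fintype κ] [DecidableEq κ]
    (f : ι → κ) (P : κ → Prop) [DecidablePred P] :
    #{i | P (f i)} = ∑ k, if P k then #{i | f i = k} else 0 := by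
  rw [card_eq_sum_card_fiberwise (f := f) (t := {k | P k}) fun i hi => by simpa using hi,
    sum_filter]
  refine sum_congr rfl fun k _ => ?_
  split_ifs with hk
  · rw [filter_filter]
    exact congrArg card (filter_congr fun i _ => and_iff_right_of_imp fun h => h ▸ hk)
  · rfl

section Word

variable {τ : Type} [Fintype τ] [DecidableEq τ] {N : ℕ} (φ : NF τ) (lab : Fin N → τ → Bool)
  (v : Fin N)

lemma wcount_ne_zero_iff (θ : WOrd) (β : τ → Bool) :
    wcount lab v θ β ≠ 0 ↔ ∃ w, ordOf v w = θ ∧ lab w = β := by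
  simp [wcount]

lemma ftp_ne_zero_iff (θ : WOrd) (β : τ → Bool) :
    ftp φ lab v θ β ≠ (0, fun _ => 0) ↔ ∃ w, ordOf v w = θ ∧ lab w = β := by
  rw [← wcount_ne_zero_iff, ftp, Ne, Prod.ext_iff]
  exact not_congr ⟨fun h => by simpa using h.1, fun h => by simp [h]⟩

lemma card_filter_eq_sum_wcount (P : (τ → Bool) → WOrd → Bool) :
    #{w | P (lab w) (ordOf v w) = true} =
      ∑ θ, ∑ β, if P β θ = true then wcount lab v θ β else 0 := by
  rw [card_filter_comp_eq_sum_ite (fun w => (ordOf v w, lab w)) fun p => P p.2 p.1 = true,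
    Fintype.sum_prod_type]
  simp only [wcount, Prod.mk.injEq]

lemma sum_wcount_modEq_sum_ftp (c : Fin φ.m) (P : (τ → Bool) → WOrd → Bool) :
    (∑ θ, ∑ β, if P β θ = true then wcount lab v θ β else 0) ≡
      ∑ θ, ∑ β, if P β θ = true then (ftp φ lab v θ β).2 c else 0 [MOD φ.l c] := by
  gcongr with θ _ β _
  split_ifs
  · exact (Nat.mod_modEq _ _).symm
  · rfl

lemma consistent_ftp_iff :
    Consistent φ (lab v) (ftp φ lab v) ↔
      (∀ w, φ.chi (lab v) (lab w) (ordOf v w) = true) ∧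
      (∀ c, ∃ w, φ.chis c (lab v) (lab w) (ordOf v w) = true) ∧
      (∀ c, φ.bow c (#{w | φ.psi c (lab v) (lab w) (ordOf v w) = true} % φ.l c)) := by
  simp only [Consistent, ftp_ne_zero_iff, card_filter_eq_sum_wcount]
  refine and_congr ?_ (and_congr ?_ (forall_congr' fun c => ?_))
  · exact ⟨fun h w => h _ _ ⟨w, rfl, rfl⟩, fun h θ β ⟨w, hθ, hβ⟩ => hθ ▸ hβ ▸ h w⟩
  · exact forall_congr' fun c =>
      ⟨fun ⟨θ, β, ⟨w, hθ, hβ⟩, h⟩ => ⟨w, hθ ▸ hβ ▸ h⟩, fun ⟨w, h⟩ => ⟨_, _, ⟨w, rfl, rfl⟩, h⟩⟩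
  · rw [(sum_wcount_modEq_sum_ftp φ lab v c _ : _ % _ = _ % _)]

end Word

theorem stmt_5_general {τ : Type} [Fintype τ] [DecidableEq τ] (φ : NF τ)
    (N : ℕ) (lab : Fin N → τ → Bool) :
    WSat φ N lab ↔ ∀ v : Fin N, Consistent φ (lab v) (ftp φ lab v) := by
  simp only [consistent_ftp_iff]
  exact ⟨fun ⟨hχ, hχs, hψ⟩ v => ⟨hχ v, fun c => hχs c v, fun c => hψ c v⟩,
    fun h => ⟨fun v => (h v).1, fun c v => (h v).2.1 c, fun c v => (h v).2.2 c⟩⟩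

/-- **Lemma 4 (words).** A finite word satisfies a normal-form FO²MOD formula
iff every full type realized in it is `φ`-consistent. -/
theorem stmt_5 {τ : Type} [Fintype τ] [DecidableEq τ] (φ : NF τ)
    (N : ℕ) (hN : 0 < N) (lab : Fin N → τ → Bool) :
    WSat φ N lab ↔ ∀ v : Fin N, Consistent φ (lab v) (ftp φ lab v) :=
  stmt_5_general φ N lab
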